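/- Let G be a stationary time series DMG over micro-processes X_1, …, X_n, let Q be a partition of {X_1, …, X_n}, and let G̃ = co(G, Q'') be the induced grouped summary DMG, where Q'' = {Y × ℤ : Y ∈ Q} is the full process partition. If (G, Q) is causally mixing, then every apparent cause in G̃ is a true cause in G̃: whenever there is a directed path from a group Y × ℤ to a group Z × ℤ on G̃, there is a directed path on G from some node Y(s) with Y ∈ Y to some node Z(t) with Z ∈ Z. -/
import Mathlib


/-! ## Mixed graphs -/

/-- A mixed graph: directed, bidirected and undirected edges, no self-edges. -/
structure MixedGraph (V : Type) where
  dir : V → V → Prop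
  bidir : V → V → Prop
  undir : V → V → Prop
  bidir_symm : ∀ {a b}, bidir a b → bidir b a
  undir_symm : ∀ {a b}, undir a b → undir b a
  dir_irrefl : ∀ a, ¬ dir a a
  bidir_irrefl : ∀ a, ¬ bidir a a
  undir_irrefl : ∀ a, ¬ undir a a

namespace MixedGraph

variable {V I : Type}

/-- A directed mixed graph is a mixed graph without undirected edges. -/
def IsDMG (G : MixedGraph V) : Prop := ∀ a b, ¬ G.undir a b

/-- `a` and `b` lie in the same strongly connected component: there are directed
paths between them in both directions. -/
def Strongly (G : MixedGraph V) (a b : V) : Prop :=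
  Relation.ReflTransGen G.dir a b ∧ Relation.ReflTransGen G.dir b a

lemma Strongly.refl (G : MixedGraph V) (a : V) : G.Strongly a a :=
  ⟨Relation.ReflTransGen.refl, Relation.ReflTransGen.refl⟩

lemma Strongly.symm {G : MixedGraph V} {a b : V} (h : G.Strongly a b) : G.Strongly b a :=
  ⟨h.2, h.1⟩

/-- A graph is acyclic if it has no nontrivial directed closed walk. -/
def Acyclic (G : MixedGraph V) : Prop := ∀ a, ¬ Relation.TransGen G.dir a a

end MixedGraph

/-! ## Walks -/

/-- The four ways in which an edge can occur on a walk, as traversed from its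
first node `a` to its second node `b`: `fw` is `a → b`, `bw` is `a ← b`,
`bi` is `a ↔ b` and `un` is `a − b`. -/
inductive StepKind | fw | bw | bi | un
deriving DecidableEq

/-- A step of a walk: an ordered pair of nodes together with the kind of edge. -/
structure Step (V : Type) where
  a : V
  b : V
  k : StepKind

/-- The step is an actual edge of the graph `G`. -/
def Step.ok {V : Type} (G : MixedGraph V) (s : Step V) : Prop :=
  match s.k with
  | .fw => G.dir s.a s.b
  | .bw => G.dir s.b s.a
  | .bi => G.bidir s.a s.b
  | .un => G.undir s.a s.b

/-- The edge of the step has an arrowhead at its first node. -/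
def Step.headA {V : Type} (s : Step V) : Prop := s.k = .bw ∨ s.k = .bi

/-- The edge of the step has an arrowhead at its second node. -/
def Step.headB {V : Type} (s : Step V) : Prop := s.k = .fw ∨ s.k = .bi

namespace MixedGraph

variable {V I : Type}

/-- `IsWalk G x y L`: the list of steps `L` forms a walk from `x` to `y` in `G`. -/
inductive IsWalk (G : MixedGraph V) : V → V → List (Step V) → Prop
  | nil (a : V) : IsWalk G a a []
  | cons {c : V} (s : Step V) (L : List (Step V)) (hok : s.ok G)
      (hw : IsWalk G s.b c L) : IsWalk G s.a c (s :: L)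

/-- `v` is a collider at junction `i` of the walk `L`: both edges adjacent to the
inner node `v` point into `v`. -/
def ColliderAt (L : List (Step V)) (i : ℕ) (v : V) : Prop :=
  ∃ s t, L[i]? = some s ∧ L[i+1]? = some t ∧ s.b = v ∧ t.a = v ∧ s.headB ∧ t.headA

/-- `v` is a non-collider at junction `i` of the walk `L`. -/
def NonColliderAt (L : List (Step V)) (i : ℕ) (v : V) : Prop :=
  ∃ s t, L[i]? = some s ∧ L[i+1]? = some t ∧ s.b = v ∧ t.a = v ∧ ¬ (s.headB ∧ t.headA)

/-- The walk `L` from `x` to `y` is m-blocked by the node set `S`. -/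
def MBlockedWalk (G : MixedGraph V) (S : Set V) (x y : V) (L : List (Step V)) : Prop :=
  x ∈ S ∨ y ∈ S ∨
  (∃ i v, ColliderAt L i v ∧ ∀ d, Relation.ReflTransGen G.dir v d → d ∉ S) ∨
  (∃ i v, NonColliderAt L i v ∧ v ∈ S)

/-- The walk `L` from `x` to `y` is σ-blocked by the node set `S`. -/
def SigmaBlockedWalk (G : MixedGraph V) (S : Set V) (x y : V) (L : List (Step V)) : Prop :=
  x ∈ S ∨ y ∈ S ∨
  (∃ i v, ColliderAt L i v ∧ ∀ d, Relation.ReflTransGen G.dir v d → d ∉ S) ∨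
  (∃ i s t, L[i]? = some s ∧ L[i+1]? = some t ∧ s.b = t.a ∧ ¬ (s.headB ∧ t.headA) ∧
    s.b ∈ S ∧
    (((s.k = .bw ∨ s.k = .un) ∧ ¬ G.Strongly s.b s.a) ∨
     ((t.k = .fw ∨ t.k = .un) ∧ ¬ G.Strongly t.a t.b)))

/-- `x` and `y` are m-separated by `S` in `G`. -/
def MSep (G : MixedGraph V) (S : Set V) (x y : V) : Prop :=
  ∀ L, G.IsWalk x y L → G.MBlockedWalk S x y L

/-- `x` and `y` are σ-separated by `S` in `G`. -/
def SigmaSep (G : MixedGraph V) (S : Set V) (x y : V) : Prop :=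
  ∀ L, G.IsWalk x y L → G.SigmaBlockedWalk S x y L

/-! ## Acyclification -/

/-- The acyclification of a mixed graph. -/
def acy (G : MixedGraph V) : MixedGraph V where
  dir a b := (∃ c, G.dir a c ∧ G.Strongly c b) ∧ ¬ G.Strongly a b
  bidir a b := a ≠ b ∧ (G.Strongly a b ∨
    ∃ a' b', G.Strongly a a' ∧ G.Strongly b b' ∧ G.bidir a' b')
  undir a b := ¬ G.Strongly a b ∧ G.undir a b
  bidir_symm := by
    rintro a b ⟨hab, h | ⟨a', b', ha, hb, h⟩⟩
    · exact ⟨hab.symm, Or.inl h.symm⟩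
    · exact ⟨hab.symm, Or.inr ⟨b', a', hb, ha, G.bidir_symm h⟩⟩
  undir_symm := by
    rintro a b ⟨h1, h2⟩
    exact ⟨fun h => h1 h.symm, G.undir_symm h2⟩
  dir_irrefl := fun a h => h.2 (Strongly.refl G a)
  bidir_irrefl := fun a h => h.1 rfl
  undir_irrefl := fun a h => h.1 (Strongly.refl G a)

/-! ## Coarse graphs -/

/-- The coarse (quotient) graph of `G` with respect to the partition given by the
quotient map `q` onto the set of groups `I`. -/
def coarse (G : MixedGraph V) (q : V → I) : MixedGraph I where
  dir Y Z := Y ≠ Z ∧ ∃ y z, q y = Y ∧ q z = Z ∧ G.dir y z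
  bidir Y Z := Y ≠ Z ∧ ∃ y z, q y = Y ∧ q z = Z ∧ G.bidir y z
  undir Y Z := Y ≠ Z ∧ ∃ y z, q y = Y ∧ q z = Z ∧ G.undir y z
  bidir_symm := by
    rintro Y Z ⟨hne, y, z, hy, hz, h⟩
    exact ⟨hne.symm, z, y, hz, hy, G.bidir_symm h⟩
  undir_symm := by
    rintro Y Z ⟨hne, y, z, hy, hz, h⟩
    exact ⟨hne.symm, z, y, hz, hy, G.undir_symm h⟩
  dir_irrefl := fun Y h => h.1 rfl
  bidir_irrefl := fun Y h => h.1 rfl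
  undir_irrefl := fun Y h => h.1 rfl

end MixedGraph

/-- `G` is a (stationary) time series DMG over the micro-processes indexed by
`Fin n`: its nodes are the time instances `(i, t)`, it has no undirected edges,
directed edges never point into the past, and the edge structure is invariant
under time shifts. -/
structure IsTsDMG {n : ℕ} (G : MixedGraph (Fin n × ℤ)) : Prop where
  isDMG : G.IsDMG
  no_past : ∀ (i j : Fin n) (s t : ℤ), G.dir (i, s) (j, t) → s ≤ t
  stat_dir : ∀ (i j : Fin n) (s t u : ℤ), G.dir (i, s) (j, t) → G.dir (i, s + u) (j, t + u)
  stat_bidir : ∀ (i j : Fin n) (s t u : ℤ), G.bidir (i, s) (j, t) → G.bidir (i, s + u) (j, t + u)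

/-- The pair of the time series DMG `G` and the process partition `p` is causally
mixing: for every pair of micro-processes `i`, `k` in the same group and every
time `s`, there are a time `t > s` and a directed path
`(i,s) → (i₁,s+1) → … → (i_m,t−1) → (k,t)` on `G` whose intermediate processes all
lie in the group of `i` and `k`. -/
def CausallyMixing {n : ℕ} {J : Type} (G : MixedGraph (Fin n × ℤ)) (p : Fin n → J) : Prop :=
  ∀ i k : Fin n, p i = p k → ∀ s : ℤ, ∃ t : ℤ, s < t ∧ ∃ g : ℤ → Fin n,
    g s = i ∧ g t = k ∧
    (∀ r : ℤ, s ≤ r → r < t → G.dir (g r, r) (g (r + 1), r + 1)) ∧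
    (∀ r : ℤ, s < r → r < t → p (g r) = p i)

/-- Causal mixing yields a micro directed path between any two processes in the
same group, starting at any time. -/
lemma mix_path {n : ℕ} {J : Type} {G : MixedGraph (Fin n × ℤ)} {p : Fin n → J}
    (hmix : CausallyMixing G p) {i k : Fin n} (h : p i = p k) (s : ℤ) :
    ∃ t : ℤ, s ≤ t ∧ Relation.ReflTransGen G.dir (i, s) (k, t) := by
  obtain ⟨t, hst, g, hgs, hgt, hedge, -⟩ := hmix i k h s
  refine ⟨t, hst.le, ?_⟩
  have key : ∀ m : ℕ, ∀ r : ℤ, r = s + m → r ≤ t →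
      Relation.ReflTransGen G.dir (i, s) (g r, r) := by
    intro m
    induction m with
    | zero =>
      intro r hr _
      have : r = s := by omega
      subst this
      rw [hgs]
    | succ m ih =>
      intro r hr hrt
      have h1 : r - 1 = s + m := by push_cast at hr ⊢; omega
      have h2 : s ≤ r - 1 := by omega
      have h3 : r - 1 < t := by omega
      have := Relation.ReflTransGen.tail (ih (r - 1) h1 (by omega))
        (hedge (r - 1) h2 h3)
      simpa using this
  have := key (t - s).toNat t (by omega) le_rfl
  rwa [hgt] at this

open MixedGraph in
/-- Let `G` be a stationary time series DMG over the processes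
indexed by `Fin n`, let `p` be a partition of the processes and let the grouped
summary DMG be the coarse graph of `G` with respect to the full process partition
`q (i, t) = p i`. If `(G, p)` is causally mixing, then every apparent cause in the
grouped summary DMG is a true cause: whenever there is a directed path from group
`Y` to group `Z` on the grouped summary DMG, there is a directed path on `G` from
some node `(i, s)` with `p i = Y` to some node `(k, t)` with `p k = Z`. -/
theorem grouped_summary_apparent_is_true_cause {n : ℕ} {J : Type}
    (G : MixedGraph (Fin n × ℤ)) (hts : IsTsDMG G)
    (p : Fin n → J) (hp : Function.Surjective p)
    (hmix : CausallyMixing G p) :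
    ∀ Y Z : J, Relation.ReflTransGen (G.coarse fun x => p x.1).dir Y Z →
      ∃ (i k : Fin n) (s t : ℤ), p i = Y ∧ p k = Z ∧
        Relation.ReflTransGen G.dir (i, s) (k, t) := by
  intro Y Z h
  induction h with
  | refl =>
    obtain ⟨i, hi⟩ := hp Y
    exact ⟨i, i, 0, 0, hi, hi, Relation.ReflTransGen.refl⟩
  | tail _ hedge ih =>
    rename_i W Z' _
    obtain ⟨i, k, s, t, hiY, hkW, hpath⟩ := ih
    obtain ⟨-, y, z, hy, hz, hdir⟩ := hedge
    obtain ⟨t₁, -, hmixpath⟩ := mix_path hmix (hkW.trans hy.symm) t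
    have hshift : G.dir (y.1, y.2 + (t₁ - y.2)) (z.1, z.2 + (t₁ - y.2)) :=
      hts.stat_dir y.1 z.1 y.2 z.2 (t₁ - y.2) hdir
    have hy1 : (y.1, y.2 + (t₁ - y.2)) = ((y.1, t₁) : Fin n × ℤ) := by
      simp [add_sub_cancel]
    rw [hy1] at hshift
    exact ⟨i, z.1, s, z.2 + (t₁ - y.2), hiY, hz,
      (hpath.trans hmixpath).tail hshift⟩
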